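/- Let G = (V,E) be a finite simple graph. Define the Levitt curvature of a vertex v by K(v) = Σ_{k≥0} (−1)^k f_{k−1}(S(v))/(k+1) = 1 − f_0(S(v))/2 + f_1(S(v))/3 − f_2(S(v))/4 + …, where f_{−1} = 1 and f_j(S(v)) is the number of (j+1)-element cliques of the unit sphere S(v) (the sum is finite). Then Σ_{v ∈ V} K(v) = χ(G). -/
import Mathlib


open Finset
open scoped Classical

/-- The cliques of the graph `G` contained in the vertex set `A`
(nonempty sets of pairwise adjacent vertices). -/
noncomputable def cliquesOn {V : Type*} (G : SimpleGraph V) (A : Finset V) :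
    Finset (Finset V) :=
  A.powerset.filter (fun s => s.Nonempty ∧ G.IsClique (s : Set V))

/-- Euler characteristic of the subgraph of `G` induced on `A`. -/
noncomputable def eulerCharOn {V : Type*} (G : SimpleGraph V) (A : Finset V) : ℤ :=
  ∑ s ∈ cliquesOn G A, (-1) ^ (s.card - 1)

/-- Euler characteristic of a finite simple graph. -/
noncomputable def eulerChar {V : Type*} [Fintype V] (G : SimpleGraph V) : ℤ :=
  eulerCharOn G Finset.univ

/-- The vertex set of the unit sphere `S(v)`: the neighbours of `v`. -/
noncomputable def unitSphere {V : Type*} [Fintype V] (G : SimpleGraph V) (v : V) :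
    Finset V :=
  Finset.univ.filter (fun w => G.Adj v w)

/-- The Levitt curvature of a vertex:
`K(v) = 1 − f_0(S(v))/2 + f_1(S(v))/3 − … = 1 + Σ_{x clique of S(v)} (−1)^{|x|}/(|x|+1)`. -/
noncomputable def levittCurvature {V : Type*} [Fintype V] (G : SimpleGraph V)
    (v : V) : ℝ :=
  1 + ∑ s ∈ cliquesOn G (unitSphere G v), (-1 : ℝ) ^ s.card / (s.card + 1)

lemma mem_cliquesOn {V : Type*} (G : SimpleGraph V) (A : Finset V) (s : Finset V) :
    s ∈ cliquesOn G A ↔ s ⊆ A ∧ s.Nonempty ∧ G.IsClique (s : Set V) := by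
  simp [cliquesOn, and_assoc]

lemma mem_unitSphere {V : Type*} [Fintype V] (G : SimpleGraph V) {v w : V} :
    w ∈ unitSphere G v ↔ G.Adj v w := by simp [unitSphere]

lemma notMem_unitSphere {V : Type*} [Fintype V] (G : SimpleGraph V) (v : V) :
    v ∉ unitSphere G v := by simp [unitSphere]

lemma key_bij {V : Type*} [Fintype V] (G : SimpleGraph V) (f : ℕ → ℝ) :
    ∑ v : V, ∑ s ∈ cliquesOn G (unitSphere G v), f s.card
    = ∑ x ∈ (cliquesOn G univ).filter (fun x => 2 ≤ x.card), (x.card : ℝ) * f (x.card - 1) := by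
  have hconst : ∀ x ∈ (cliquesOn G univ).filter (fun x => 2 ≤ x.card),
      (x.card : ℝ) * f (x.card - 1) = ∑ _v ∈ x, f (x.card - 1) := by
    intro x _; rw [Finset.sum_const, nsmul_eq_mul]
  rw [Finset.sum_congr rfl hconst, Finset.sum_sigma', Finset.sum_sigma']
  apply Finset.sum_nbij' (i := fun p => (⟨insert p.1 p.2, p.1⟩ : Σ _x : Finset V, V))
    (j := fun q => (⟨q.2, q.1.erase q.2⟩ : Σ _v : V, Finset V))
  · rintro ⟨v, s⟩ hp
    simp only [Finset.mem_sigma, Finset.mem_univ, true_and] at hp ⊢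
    rw [mem_cliquesOn] at hp
    obtain ⟨hsub, hne, hcl⟩ := hp
    have hv : v ∉ s := fun h => notMem_unitSphere G v (hsub h)
    constructor
    · rw [Finset.mem_filter, mem_cliquesOn]
      refine ⟨⟨Finset.subset_univ _, ⟨v, Finset.mem_insert_self _ _⟩, ?_⟩, ?_⟩
      · intro a ha b hb hab
        simp only [Finset.coe_insert, Set.mem_insert_iff] at ha hb
        rcases ha with rfl | ha
        · rcases hb with rfl | hb
          · exact absurd rfl hab
          · exact (mem_unitSphere G).1 (hsub hb)
        · rcases hb with rfl | hb
          · exact ((mem_unitSphere G).1 (hsub ha)).symm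
          · exact hcl ha hb hab
      · rw [Finset.card_insert_of_notMem hv]
        have := Finset.card_pos.2 hne; omega
    · exact Finset.mem_insert_self _ _
  · rintro ⟨x, v⟩ hq
    simp only [Finset.mem_sigma, Finset.mem_filter, mem_cliquesOn] at hq
    obtain ⟨⟨⟨_, hne, hcl⟩, hcard⟩, hv⟩ := hq
    simp only [Finset.mem_sigma, Finset.mem_univ, true_and, mem_cliquesOn]
    refine ⟨?_, ?_, hcl.subset (by simp [Finset.erase_subset])⟩
    · intro w hw
      simp only [Finset.mem_erase] at hw
      simp only [unitSphere, Finset.mem_filter, Finset.mem_univ, true_and]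
      exact (hcl hw.2 hv hw.1).symm
    · rw [← Finset.card_pos, Finset.card_erase_of_mem hv]; omega
  · rintro ⟨v, s⟩ hp
    simp only [Finset.mem_sigma, Finset.mem_univ, true_and, mem_cliquesOn] at hp
    have hv : v ∉ s := fun h => notMem_unitSphere G v (hp.1 h)
    simp [Finset.erase_insert hv]
  · rintro ⟨x, v⟩ hq
    simp only [Finset.mem_sigma, Finset.mem_filter] at hq
    simp [Finset.insert_erase hq.2]
  · rintro ⟨v, s⟩ hp
    simp only [Finset.mem_sigma, Finset.mem_univ, true_and, mem_cliquesOn] at hp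
    have hv : v ∉ s := fun h => notMem_unitSphere G v (hp.1 h)
    simp [Finset.card_insert_of_notMem hv]

lemma singletons_eq {V : Type*} [Fintype V] (G : SimpleGraph V) :
    (cliquesOn G univ).filter (fun x => ¬ 2 ≤ x.card)
      = Finset.univ.image (fun v => ({v} : Finset V)) := by
  ext x
  simp only [Finset.mem_filter, mem_cliquesOn, Finset.mem_image, Finset.mem_univ, true_and]
  constructor
  · rintro ⟨⟨_, hne, _⟩, h2⟩
    have hc : x.card = 1 := by have := Finset.card_pos.2 hne; omega
    obtain ⟨v, rfl⟩ := Finset.card_eq_one.1 hc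
    exact ⟨v, rfl⟩
  · rintro ⟨v, rfl⟩
    exact ⟨⟨Finset.subset_univ _, ⟨v, Finset.mem_singleton_self v⟩,
      by simp [SimpleGraph.isClique_singleton]⟩, by simp⟩

theorem gauss_bonnet_levitt' {V : Type*} [Fintype V] (G : SimpleGraph V) :
    ∑ v : V, (1 + ∑ s ∈ cliquesOn G (unitSphere G v), (-1 : ℝ) ^ s.card / (s.card + 1))
      = ((∑ s ∈ cliquesOn G univ, (-1 : ℤ) ^ (s.card - 1) : ℤ) : ℝ) := by
  rw [Finset.sum_add_distrib, key_bij G (fun k => (-1 : ℝ) ^ k / (k + 1))]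
  have hterm : ∀ x ∈ (cliquesOn G univ).filter (fun x => 2 ≤ x.card),
      (x.card : ℝ) * ((-1 : ℝ) ^ (x.card - 1) / ((x.card - 1 : ℕ) + 1))
        = (-1 : ℝ) ^ (x.card - 1) := by
    intro x hx
    have h2 : 2 ≤ x.card := (Finset.mem_filter.1 hx).2
    have : ((x.card - 1 : ℕ) : ℝ) + 1 = (x.card : ℝ) := by
      rw [Nat.cast_sub (by omega)]; ring
    rw [this]
    field_simp
  rw [Finset.sum_congr rfl hterm]
  push_cast
  rw [← Finset.sum_filter_add_sum_filter_not (cliquesOn G univ) (fun x => 2 ≤ x.card)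
    (fun x => (-1 : ℝ) ^ (x.card - 1))]
  rw [singletons_eq, Finset.sum_image (fun a _ b _ h => Finset.singleton_injective h)]
  simp only [Finset.card_singleton, Nat.sub_self, pow_zero, Finset.sum_const, nsmul_eq_mul,
    mul_one, Finset.card_univ]
  rw [add_comm]

/-- Gauss–Bonnet with Levitt curvature: `Σ_v K(v) = χ(G)`. -/
theorem gauss_bonnet_levitt {V : Type*} [Fintype V] (G : SimpleGraph V) :
    ∑ v : V, levittCurvature G v = (eulerChar G : ℝ) := by
  simp only [levittCurvature, eulerChar, eulerCharOn]
  exact gauss_bonnet_levitt' G
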